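/- Suppose $v^\theta$ satisfies $\int \frac{|v^\theta|}{r}|g|^2\,dx \leq C_1 \int|\partial_r g|^2\,dx$ for all $g$ supported in $\{r \leq 2\delta\}$, and $|rv^\theta| \leq C_1|\ln r|^{-2}$ for $r \leq 2\delta < 1$, and $|rv^\theta| \leq M$ everywhere. Then $\int |v^\theta|^2 |f|^2\,dx \leq 8C_1^2|\ln\delta|^{-2}\int|\partial_r f|^2\,dx + C(\delta, M, C_1)\int_{r\geq\delta}|f|^2\,dx$ for all smooth compactly supported $f$, where $C(\delta,M,C_1)$ depends only on $\delta$, $M$ and $C_1$. -/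

import Mathlib

open MeasureTheory

set_option maxHeartbeats 2000000

lemma aux_w_int {b : ℝ} (hb0 : 0 < b) (hb1 : b < 1) :
    IntegrableOn (fun r => (r * Real.log r ^ 2)⁻¹) (Set.Ioc 0 b) := by
  have h := intervalIntegral.integrableOn_deriv_of_nonneg
    (g := fun r => -(Real.log r)⁻¹) (g' := fun r => (r * Real.log r ^ 2)⁻¹)
    (a := 0) (b := b) ?_ ?_ ?_
  · exact h
  · intro r hr
    rcases eq_or_ne r 0 with rfl | hr0
    · have hval : -(Real.log (0:ℝ))⁻¹ = 0 := by simp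
      have h1 : Filter.Tendsto (fun r : ℝ => -(Real.log r)⁻¹) (nhdsWithin 0 (Set.Ioi 0)) (nhds 0) := by
        have h0 : Filter.Tendsto (fun r : ℝ => -Real.log r) (nhdsWithin 0 (Set.Ioi 0))
            Filter.atTop :=
          Filter.tendsto_neg_atBot_atTop.comp Real.tendsto_log_nhdsGT_zero
        have h1 := h0.inv_tendsto_atTop
        simpa [Pi.inv_def, inv_neg] using h1
      have h2 : Filter.Tendsto (fun r : ℝ => -(Real.log r)⁻¹) (pure (0:ℝ)) (nhds 0) := by
        simpa [hval] using tendsto_pure_nhds (fun r : ℝ => -(Real.log r)⁻¹) 0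
      have hsub : Set.Icc (0:ℝ) b ⊆ insert 0 (Set.Ioi 0) := by
        intro x hx; rcases eq_or_lt_of_le hx.1 with h | h
        · exact Or.inl h.symm
        · exact Or.inr h
      have goal' : Filter.Tendsto (fun r : ℝ => -(Real.log r)⁻¹)
          (nhdsWithin 0 (Set.Icc 0 b)) (nhds (-(Real.log (0:ℝ))⁻¹)) := by
        rw [hval]
        refine Filter.Tendsto.mono_left ?_ (nhdsWithin_mono _ hsub)
        rw [nhdsWithin_insert]
        exact Filter.Tendsto.sup h2 h1
      exact goal'
    · have hrpos : 0 < r := lt_of_le_of_ne hr.1 (Ne.symm hr0)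
      have hlog : Real.log r ≠ 0 := by
        have : Real.log r < 0 := Real.log_neg hrpos (lt_of_le_of_lt hr.2 hb1)
        linarith
      exact (((Real.continuousAt_log hr0).inv₀ hlog).neg).continuousWithinAt
  · intro x hx
    have hx0 : 0 < x := hx.1
    have hlog : Real.log x < 0 := Real.log_neg hx0 (lt_trans hx.2 hb1)
    have h1 : HasDerivAt Real.log x⁻¹ x := Real.hasDerivAt_log (ne_of_gt hx0)
    have h2 : HasDerivAt (fun r => (Real.log r)⁻¹) (-(x⁻¹) / Real.log x ^ 2) x :=
      h1.inv (ne_of_lt hlog)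
    have hne : Real.log x ≠ 0 := ne_of_lt hlog
    refine h2.neg.congr_deriv ?_
    field_simp
  · intro x hx
    have hx0 : 0 < x := hx.1
    have hlog : Real.log x < 0 := Real.log_neg hx0 (lt_trans hx.2 hb1)
    have h2 : 0 < Real.log x ^ 2 := pow_two_pos_of_ne_zero (ne_of_lt hlog)
    exact le_of_lt (inv_pos.2 (mul_pos hx0 h2))

lemma aux_gw_int {b : ℝ} (hb0 : 0 < b) (hb1 : b < 1) (g : ℝ → ℝ) (hgc : Continuous g)
    (S : ℝ) (hS : ∀ r, |g r| ≤ S) :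
    IntegrableOn (fun r => g r ^ 2 * (r * Real.log r ^ 2)⁻¹) (Set.Ioc 0 b) := by
  have hwm : Measurable fun r : ℝ => (r * Real.log r ^ 2)⁻¹ :=
    (measurable_id.mul (Real.measurable_log.pow_const 2)).inv
  refine Integrable.mono' ((aux_w_int hb0 hb1).const_mul (S ^ 2))
    (((hgc.pow 2).aestronglyMeasurable).mul hwm.aestronglyMeasurable) ?_
  refine (ae_restrict_iff' measurableSet_Ioc).2 (Filter.Eventually.of_forall ?_)
  intro r hr
  have hL : Real.log r < 0 := Real.log_neg hr.1 (lt_of_le_of_lt hr.2 hb1)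
  have hwpos : 0 ≤ (r * Real.log r ^ 2)⁻¹ := by
    have h2 : 0 < Real.log r ^ 2 := pow_two_pos_of_ne_zero (ne_of_lt hL)
    exact le_of_lt (inv_pos.2 (mul_pos hr.1 h2))
  have hg2 : g r ^ 2 ≤ S ^ 2 := by
    rw [← sq_abs]; exact pow_le_pow_left₀ (abs_nonneg _) (hS r) 2
  rw [Real.norm_eq_abs, abs_mul, abs_of_nonneg hwpos, abs_of_nonneg (sq_nonneg _)]
  exact mul_le_mul_of_nonneg_right hg2 hwpos

lemma aux_hardy {b : ℝ} (hb0 : 0 < b) (hb1 : b < 1) (g g' : ℝ → ℝ)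
    (hder : ∀ r, HasDerivAt g (g' r) r) (hgc : Continuous g) (hg'c : Continuous g')
    (hgb : g b = 0) (S G : ℝ) (hS : ∀ r, |g r| ≤ S) (hG : ∀ r, |g' r| ≤ G) :
    ∫ r in Set.Ioc 0 b, g r ^ 2 * (r * Real.log r ^ 2)⁻¹
      ≤ 4 * ∫ r in Set.Ioc 0 b, g' r ^ 2 * r := by
  have hSnn : 0 ≤ S := le_trans (abs_nonneg _) (hS 0)
  have hGnn : 0 ≤ G := le_trans (abs_nonneg _) (hG 0)
  have hlogb : Real.log b < 0 := Real.log_neg hb0 hb1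
  have hlogr : ∀ r ∈ Set.Ioc (0:ℝ) b, Real.log r < 0 := fun r hr =>
    Real.log_neg hr.1 (lt_of_le_of_lt hr.2 hb1)
  have hw := aux_w_int hb0 hb1
  have hwm : Measurable fun r : ℝ => (r * Real.log r ^ 2)⁻¹ :=
    (measurable_id.mul (Real.measurable_log.pow_const 2)).inv
  -- integrability of g² w
  have hint2 : IntegrableOn (fun r => g r ^ 2 * (r * Real.log r ^ 2)⁻¹) (Set.Ioc 0 b) := by
    refine Integrable.mono' (hw.const_mul (S ^ 2))
      (((hgc.pow 2).aestronglyMeasurable).mul hwm.aestronglyMeasurable) ?_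
    refine (ae_restrict_iff' measurableSet_Ioc).2 (Filter.Eventually.of_forall ?_)
    intro r hr
    have hwpos : 0 ≤ (r * Real.log r ^ 2)⁻¹ := by
      have h2 : 0 < Real.log r ^ 2 := pow_two_pos_of_ne_zero (ne_of_lt (hlogr r hr))
      exact le_of_lt (inv_pos.2 (mul_pos hr.1 h2))
    have hg2 : g r ^ 2 ≤ S ^ 2 := by
      rw [← sq_abs]; exact pow_le_pow_left₀ (abs_nonneg _) (hS r) 2
    rw [Real.norm_eq_abs, abs_mul, abs_of_nonneg hwpos, abs_of_nonneg (sq_nonneg _)]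
    exact mul_le_mul_of_nonneg_right hg2 hwpos
  -- integrability of 2 g g' (log)⁻¹
  have hint0 : IntegrableOn (fun r => 2 * g r * g' r * (Real.log r)⁻¹) (Set.Ioc 0 b) := by
    refine Integrable.mono' ((integrableOn_const (C := 2 * S * G * (-Real.log b)⁻¹) measure_Ioc_lt_top.ne))
      (((((continuous_const.mul hgc).mul hg'c)).aestronglyMeasurable).mul
        Real.measurable_log.inv.aestronglyMeasurable) ?_
    refine (ae_restrict_iff' measurableSet_Ioc).2 (Filter.Eventually.of_forall ?_)
    intro r hr
    have hL := hlogr r hr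
    have hLb : -Real.log b ≤ -Real.log r := by
      have : Real.log r ≤ Real.log b := Real.log_le_log hr.1 hr.2
      linarith
    have hinv : |(Real.log r)⁻¹| ≤ (-Real.log b)⁻¹ := by
      rw [abs_inv, abs_of_neg hL]
      exact inv_anti₀ (by linarith) hLb
    rw [Real.norm_eq_abs, abs_mul, abs_mul, abs_mul, abs_two]
    have h1 : |g r| * |g' r| ≤ S * G := mul_le_mul (hS r) (hG r) (abs_nonneg _) hSnn
    calc 2 * |g r| * |g' r| * |(Real.log r)⁻¹|
        = 2 * ((|g r| * |g' r|) * |(Real.log r)⁻¹|) := by ring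
      _ ≤ 2 * ((S * G) * (-Real.log b)⁻¹) := by
          refine mul_le_mul_of_nonneg_left ?_ (by norm_num)
          exact mul_le_mul h1 hinv (abs_nonneg _) (mul_nonneg hSnn hGnn)
      _ = 2 * S * G * (-Real.log b)⁻¹ := by ring
  -- integrability of g'² r
  have hint3 : IntegrableOn (fun r => g' r ^ 2 * r) (Set.Ioc 0 b) := by
    refine Integrable.mono' ((integrableOn_const (C := G ^ 2 * b) measure_Ioc_lt_top.ne))
      (((hg'c.pow 2).mul continuous_id).aestronglyMeasurable) ?_
    refine (ae_restrict_iff' measurableSet_Ioc).2 (Filter.Eventually.of_forall ?_)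
    intro r hr
    rw [Real.norm_eq_abs, abs_mul, abs_of_nonneg (sq_nonneg _), abs_of_pos hr.1]
    have : g' r ^ 2 ≤ G ^ 2 := by
      rw [← sq_abs]; exact pow_le_pow_left₀ (abs_nonneg _) (hG r) 2
    exact mul_le_mul this hr.2 (le_of_lt hr.1) (by positivity)
  -- FTC for Φ = -(g²)·(log)⁻¹
  set Φ : ℝ → ℝ := fun r => -(g r ^ 2) * (Real.log r)⁻¹ with hΦdef
  set Φ' : ℝ → ℝ := fun r =>
    g r ^ 2 * (r * Real.log r ^ 2)⁻¹ - 2 * g r * g' r * (Real.log r)⁻¹ with hΦ'def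
  have hΦd : ∀ x ∈ Set.Ioo (0:ℝ) b, HasDerivAt Φ (Φ' x) x := by
    intro x hx
    have hx0 : 0 < x := hx.1
    have hL : Real.log x < 0 := Real.log_neg hx0 (lt_trans hx.2 hb1)
    have hLne : Real.log x ≠ 0 := ne_of_lt hL
    have h1 : HasDerivAt (fun r => g r ^ 2) (2 * g x * g' x) x := by
      have := (hder x).pow 2
      refine this.congr_deriv ?_; norm_num
    have h2 : HasDerivAt (fun r => (Real.log r)⁻¹) (-(x⁻¹) / Real.log x ^ 2) x :=
      (Real.hasDerivAt_log (ne_of_gt hx0)).inv hLne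
    have h3 := (h1.neg).mul h2
    refine h3.congr_deriv ?_; symm
    show Φ' x = _
    rw [hΦ'def, Pi.neg_apply]
    field_simp
    ring
  have hΦc : ContinuousOn Φ (Set.Icc 0 b) := by
    intro r hr
    rcases eq_or_ne r 0 with rfl | hr0
    · have h1 : Filter.Tendsto (fun r : ℝ => (Real.log r)⁻¹) (nhdsWithin 0 (Set.Ioi 0)) (nhds 0) := by
        have h0 : Filter.Tendsto (fun r : ℝ => -Real.log r) (nhdsWithin 0 (Set.Ioi 0))
            Filter.atTop :=
          Filter.tendsto_neg_atBot_atTop.comp Real.tendsto_log_nhdsGT_zero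
        have h1 := h0.inv_tendsto_atTop
        have : (fun r : ℝ => (-Real.log r)⁻¹) = fun r : ℝ => -(Real.log r)⁻¹ := by
          funext r; rw [inv_neg]
        rw [Pi.inv_def] at h1
        simp only [this] at h1
        simpa using h1.neg
      have h2 : Filter.Tendsto (fun r : ℝ => (Real.log r)⁻¹) (pure (0:ℝ)) (nhds 0) := by
        simpa using tendsto_pure_nhds (fun r : ℝ => (Real.log r)⁻¹) 0
      have hsub : Set.Icc (0:ℝ) b ⊆ insert 0 (Set.Ioi 0) := by
        intro x hx; rcases eq_or_lt_of_le hx.1 with h | h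
        · exact Or.inl h.symm
        · exact Or.inr h
      have h3 : Filter.Tendsto (fun r : ℝ => (Real.log r)⁻¹) (nhdsWithin 0 (Set.Icc 0 b))
          (nhds 0) := by
        refine Filter.Tendsto.mono_left ?_ (nhdsWithin_mono _ hsub)
        rw [nhdsWithin_insert]
        exact Filter.Tendsto.sup h2 h1
      have h4 : Filter.Tendsto (fun r : ℝ => -(g r ^ 2)) (nhdsWithin 0 (Set.Icc 0 b))
          (nhds (-(g 0 ^ 2))) :=
        (((hgc.pow 2).neg).tendsto 0).mono_left nhdsWithin_le_nhds
      have goal' : Filter.Tendsto Φ (nhdsWithin 0 (Set.Icc 0 b))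
          (nhds (-(g 0 ^ 2) * (Real.log 0)⁻¹)) := by
        rw [Real.log_zero, inv_zero, mul_zero]
        simpa [hΦdef, neg_mul] using h4.mul h3
      exact goal'
    · have hL : Real.log r ≠ 0 := by
        have hrpos : 0 < r := lt_of_le_of_ne hr.1 (Ne.symm hr0)
        exact ne_of_lt (Real.log_neg hrpos (lt_of_le_of_lt hr.2 hb1))
      exact (((hgc.pow 2).neg.continuousAt).mul
        ((Real.continuousAt_log hr0).inv₀ hL)).continuousWithinAt
  have hΦ'int : IntervalIntegrable Φ' volume 0 b :=
    (intervalIntegrable_iff_integrableOn_Ioc_of_le (le_of_lt hb0)).2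
      (hint2.sub hint0)
  have hFTC := intervalIntegral.integral_eq_sub_of_hasDeriv_right_of_le (le_of_lt hb0) hΦc
    (fun x hx => (hΦd x hx).hasDerivWithinAt) hΦ'int
  rw [intervalIntegral.integral_of_le (le_of_lt hb0)] at hFTC
  have hΦb : Φ b = 0 := by rw [hΦdef]; simp [hgb]
  have hΦ0 : Φ 0 = 0 := by rw [hΦdef]; simp
  rw [hΦb, hΦ0, sub_zero] at hFTC
  have hsplit : ∫ r in Set.Ioc 0 b, Φ' r
      = (∫ r in Set.Ioc 0 b, g r ^ 2 * (r * Real.log r ^ 2)⁻¹)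
        - ∫ r in Set.Ioc 0 b, 2 * g r * g' r * (Real.log r)⁻¹ :=
    integral_sub hint2 hint0
  have hPeq : (∫ r in Set.Ioc 0 b, g r ^ 2 * (r * Real.log r ^ 2)⁻¹)
      = ∫ r in Set.Ioc 0 b, 2 * g r * g' r * (Real.log r)⁻¹ := by
    rw [hsplit] at hFTC; linarith
  -- pointwise AM-GM bound
  have hpt : ∀ r ∈ Set.Ioc (0:ℝ) b, 2 * g r * g' r * (Real.log r)⁻¹
      ≤ 1/2 * (g r ^ 2 * (r * Real.log r ^ 2)⁻¹) + 2 * (g' r ^ 2 * r) := by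
    intro r hr
    have hr0 : 0 < r := hr.1
    have hL : Real.log r < 0 := hlogr r hr
    have hLne : Real.log r ≠ 0 := ne_of_lt hL
    have e : 1/2 * (g r ^ 2 * (r * Real.log r ^ 2)⁻¹) + 2 * (g' r ^ 2 * r)
        - 2 * g r * g' r * (Real.log r)⁻¹
        = (g r * (Real.log r)⁻¹ - 2 * g' r * r) ^ 2 / (2 * r) := by
      field_simp
      ring
    have hq : 0 ≤ (g r * (Real.log r)⁻¹ - 2 * g' r * r) ^ 2 / (2 * r) :=
      div_nonneg (sq_nonneg _) (by linarith)
    linarith [e ▸ hq]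
  have hmono : (∫ r in Set.Ioc 0 b, 2 * g r * g' r * (Real.log r)⁻¹)
      ≤ ∫ r in Set.Ioc 0 b, (1/2 * (g r ^ 2 * (r * Real.log r ^ 2)⁻¹) + 2 * (g' r ^ 2 * r)) :=
    setIntegral_mono_on hint0 ((hint2.const_mul (1/2)).add (hint3.const_mul 2))
      measurableSet_Ioc hpt
  rw [integral_add (hint2.const_mul (1/2)) (hint3.const_mul 2),
    integral_const_mul, integral_const_mul] at hmono
  linarith [hPeq ▸ hmono]

lemma aux_key (vθz : ℝ → ℝ) (C₁ M δ : ℝ) (hC₁ : 0 < C₁) (hM : 0 ≤ M) (hδ : 0 < δ)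
    (hδ1 : 2 * δ < 1)
    (hlog : ∀ r ∈ Set.Ioc (0:ℝ) (2 * δ), |r * vθz r| ≤ C₁ / |Real.log r| ^ 2)
    (hbdd : ∀ r > (0:ℝ), |r * vθz r| ≤ M)
    (u d : ℝ → ℝ) (hud : ∀ r, HasDerivAt u (d r) r) (huc : Continuous u) (hdc : Continuous d)
    (S : ℝ) (hS : ∀ r, |u r| ≤ S) (Sd : ℝ) (hSd : ∀ r, |d r| ≤ Sd)
    (R : ℝ) (huR : ∀ r, R < |r| → u r = 0) (hdR : ∀ r, R < |r| → d r = 0)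
    (φ : ℝ → ℝ) (hφd : ∀ x, HasDerivAt φ (deriv φ x) x) (hφc : Continuous φ)
    (hφ'c : Continuous (deriv φ))
    (hφ1 : ∀ x ≤ δ, φ x = 1) (hφz : ∀ x, 2 * δ ≤ x → φ x = 0)
    (hφ01 : ∀ x, 0 ≤ φ x ∧ φ x ≤ 1)
    (hφ'0 : ∀ x, x ∉ Set.Icc δ (2 * δ) → deriv φ x = 0) (B : ℝ) (hB : ∀ x, |deriv φ x| ≤ B) :
    ∫ r in Set.Ioi (0:ℝ), |vθz r| ^ 2 * u r ^ 2 * r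
      ≤ 8 * (C₁ ^ 2 * |Real.log δ|⁻¹ ^ 2) * (∫ r in Set.Ioi (0:ℝ), d r ^ 2 * r)
        + (8 * (C₁ ^ 2 * |Real.log δ|⁻¹ ^ 2) * B ^ 2 + M ^ 2 / δ ^ 2)
          * ∫ r in Set.Ici δ, u r ^ 2 * r := by
  have hb0 : 0 < 2 * δ := by linarith
  have hδ1' : δ < 1 := by linarith
  have hSnn : 0 ≤ S := le_trans (abs_nonneg _) (hS 0)
  have hBnn : 0 ≤ B := le_trans (abs_nonneg _) (hB 0)
  have hlogδ : Real.log δ < 0 := Real.log_neg hδ hδ1'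
  set K₁ := C₁ ^ 2 * |Real.log δ|⁻¹ ^ 2 with hK₁def
  have hK₁nn : 0 ≤ K₁ := by positivity
  set g : ℝ → ℝ := fun r => φ r * u r with hgdef
  set g' : ℝ → ℝ := fun r => deriv φ r * u r + φ r * d r with hg'def
  have hg : ∀ r, HasDerivAt g (g' r) r := fun r => (hφd r).mul (hud r)
  have hgc : Continuous g := hφc.mul huc
  have hg'c : Continuous g' := (hφ'c.mul huc).add (hφc.mul hdc)
  have hgb : g (2 * δ) = 0 := by
    show φ (2 * δ) * u (2 * δ) = 0
    rw [hφz (2 * δ) le_rfl, zero_mul]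
  have hgS : ∀ r, |g r| ≤ S := by
    intro r
    show |φ r * u r| ≤ S
    rw [abs_mul]
    calc |φ r| * |u r| ≤ 1 * S :=
          mul_le_mul (by rw [abs_of_nonneg (hφ01 r).1]; exact (hφ01 r).2) (hS r)
            (abs_nonneg _) zero_le_one
      _ = S := one_mul S
  have hg'G : ∀ r, |g' r| ≤ B * S + Sd := by
    intro r
    show |deriv φ r * u r + φ r * d r| ≤ B * S + Sd
    calc |deriv φ r * u r + φ r * d r| ≤ |deriv φ r * u r| + |φ r * d r| := abs_add_le _ _
      _ ≤ B * S + Sd := by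
          rw [abs_mul, abs_mul]
          refine add_le_add (mul_le_mul (hB r) (hS r) (abs_nonneg _) hBnn) ?_
          calc |φ r| * |d r| ≤ 1 * Sd :=
                mul_le_mul (by rw [abs_of_nonneg (hφ01 r).1]; exact (hφ01 r).2) (hSd r)
                  (abs_nonneg _) zero_le_one
            _ = Sd := one_mul Sd
  -- compact support integrability
  have habs : ∀ x : ℝ, x ∉ Set.Icc (-R) R → R < |x| := by
    intro x hx
    rcases not_and_or.1 hx with h | h
    · push_neg at h
      calc R < -x := by linarith
        _ ≤ |x| := neg_le_abs x
    · push_neg at h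
      exact lt_of_lt_of_le h (le_abs_self x)
  have h_u2r_int : Integrable (fun r => u r ^ 2 * r) := by
    refine Continuous.integrable_of_hasCompactSupport ((huc.pow 2).mul continuous_id) ?_
    refine HasCompactSupport.intro (isCompact_Icc (a := -R) (b := R)) (fun x hx => ?_)
    rw [huR x (habs x hx)]; ring
  have h_d2r_int : Integrable (fun r => d r ^ 2 * r) := by
    refine Continuous.integrable_of_hasCompactSupport ((hdc.pow 2).mul continuous_id) ?_
    refine HasCompactSupport.intro (isCompact_Icc (a := -R) (b := R)) (fun x hx => ?_)
    rw [hdR x (habs x hx)]; ring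
  have h_g'2r_int : Integrable (fun r => g' r ^ 2 * r) := by
    refine Continuous.integrable_of_hasCompactSupport ((hg'c.pow 2).mul continuous_id) ?_
    refine HasCompactSupport.intro (isCompact_Icc (a := -R) (b := R)) (fun x hx => ?_)
    show (deriv φ x * u x + φ x * d x) ^ 2 * x = 0
    rw [huR x (habs x hx), hdR x (habs x hx)]; ring
  have hgw_int : IntegrableOn (fun r => g r ^ 2 * (r * Real.log r ^ 2)⁻¹)
      (Set.Ioc 0 (2 * δ)) := aux_gw_int hb0 hδ1 g hgc S hgS
  have hgw_intδ : IntegrableOn (fun r => g r ^ 2 * (r * Real.log r ^ 2)⁻¹)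
      (Set.Ioc 0 δ) := hgw_int.mono_set (Set.Ioc_subset_Ioc_right (by linarith))
  have hgw_nonneg : ∀ r ∈ Set.Ioc (0:ℝ) (2 * δ), 0 ≤ g r ^ 2 * (r * Real.log r ^ 2)⁻¹ := by
    intro r hr
    have hL : Real.log r < 0 := Real.log_neg hr.1 (lt_of_le_of_lt hr.2 hδ1)
    have h2 : 0 < Real.log r ^ 2 := pow_two_pos_of_ne_zero (ne_of_lt hL)
    exact mul_nonneg (sq_nonneg _) (le_of_lt (inv_pos.2 (mul_pos hr.1 h2)))
  -- the dominating function W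
  set W : ℝ → ℝ := fun r =>
    K₁ * Set.indicator (Set.Ioc 0 δ) (fun r => g r ^ 2 * (r * Real.log r ^ 2)⁻¹) r
      + M ^ 2 / δ ^ 2 * Set.indicator (Set.Ici δ) (fun r => u r ^ 2 * r) r with hWdef
  have hW1_int : Integrable
      (fun r => Set.indicator (Set.Ioc 0 δ) (fun r => g r ^ 2 * (r * Real.log r ^ 2)⁻¹) r) :=
    hgw_intδ.integrable_indicator measurableSet_Ioc
  have hW2_int : Integrable (fun r => Set.indicator (Set.Ici δ) (fun r => u r ^ 2 * r) r) :=
    (h_u2r_int.integrableOn (s := Set.Ici δ)).integrable_indicator measurableSet_Ici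
  have hWint : IntegrableOn W (Set.Ioi 0) :=
    ((hW1_int.const_mul K₁).add (hW2_int.const_mul (M ^ 2 / δ ^ 2))).integrableOn
  -- pointwise bound
  have hAW : ∀ r ∈ Set.Ioi (0:ℝ), |vθz r| ^ 2 * u r ^ 2 * r ≤ W r := by
    intro r hr
    rw [Set.mem_Ioi] at hr
    by_cases hrδ : r ≤ δ
    · have hmem : r ∈ Set.Ioc (0:ℝ) δ := ⟨hr, hrδ⟩
      have hterm2 : 0 ≤ M ^ 2 / δ ^ 2 * Set.indicator (Set.Ici δ) (fun r => u r ^ 2 * r) r := by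
        refine mul_nonneg (by positivity) (Set.indicator_nonneg (fun x hx => ?_) r)
        exact mul_nonneg (sq_nonneg _) (by simp only [Set.mem_Ici] at hx; linarith)
      have hL : Real.log r < 0 := Real.log_neg hr (by linarith)
      have hLne : Real.log r ≠ 0 := ne_of_lt hL
      have hLδ : |Real.log δ| ≤ |Real.log r| := by
        rw [abs_of_neg hL, abs_of_neg hlogδ]
        have : Real.log r ≤ Real.log δ := Real.log_le_log hr hrδ
        linarith
      have hLδpos : 0 < |Real.log δ| := abs_pos.2 (ne_of_lt hlogδ)
      have hvb : |vθz r| ≤ C₁ / (r * |Real.log r| ^ 2) := by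
        have h0 := hlog r ⟨hr, by linarith⟩
        rw [abs_mul, abs_of_pos hr] at h0
        have hLr2 : (0:ℝ) < |Real.log r| ^ 2 := by positivity
        have h2 : r * |vθz r| * |Real.log r| ^ 2 ≤ C₁ := by
          rw [← le_div_iff₀ hLr2]; exact h0
        have h1 : |vθz r| = r * |vθz r| / r := by field_simp
        rw [h1, div_le_div_iff₀ hr (by positivity)]
        calc r * |vθz r| * (r * |Real.log r| ^ 2)
            = r * |vθz r| * |Real.log r| ^ 2 * r := by ring
          _ ≤ C₁ * r := mul_le_mul_of_nonneg_right h2 (le_of_lt hr)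
      have hφr : φ r = 1 := hφ1 r hrδ
      have hgur : g r = u r := by show φ r * u r = u r; rw [hφr, one_mul]
      have h1 : |vθz r| ^ 2 ≤ (C₁ / (r * |Real.log r| ^ 2)) ^ 2 :=
        pow_le_pow_left₀ (abs_nonneg _) hvb 2
      have h2 : |vθz r| ^ 2 * u r ^ 2 * r ≤ (C₁ / (r * |Real.log r| ^ 2)) ^ 2 * u r ^ 2 * r :=
        mul_le_mul_of_nonneg_right (mul_le_mul_of_nonneg_right h1 (sq_nonneg _)) (le_of_lt hr)
      have hrne : r ≠ 0 := ne_of_gt hr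
      have e1 : (C₁ / (r * |Real.log r| ^ 2)) ^ 2 * u r ^ 2 * r
          = C₁ ^ 2 * (|Real.log r| ^ 2)⁻¹ * (u r ^ 2 * (r * Real.log r ^ 2)⁻¹) := by
        rw [sq_abs]
        field_simp
      have h3 : C₁ ^ 2 * (|Real.log r| ^ 2)⁻¹ ≤ K₁ := by
        rw [hK₁def]
        have hinv : (|Real.log r| ^ 2)⁻¹ ≤ (|Real.log δ| ^ 2)⁻¹ :=
          inv_anti₀ (by positivity) (pow_le_pow_left₀ (abs_nonneg _) hLδ 2)
        calc C₁ ^ 2 * (|Real.log r| ^ 2)⁻¹ ≤ C₁ ^ 2 * (|Real.log δ| ^ 2)⁻¹ :=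
              mul_le_mul_of_nonneg_left hinv (by positivity)
          _ = C₁ ^ 2 * |Real.log δ|⁻¹ ^ 2 := by rw [← inv_pow]
      have hwnn : 0 ≤ u r ^ 2 * (r * Real.log r ^ 2)⁻¹ := by
        have h2' : 0 < Real.log r ^ 2 := pow_two_pos_of_ne_zero hLne
        exact mul_nonneg (sq_nonneg _) (le_of_lt (inv_pos.2 (mul_pos hr h2')))
      have h4 : |vθz r| ^ 2 * u r ^ 2 * r ≤ K₁ * (u r ^ 2 * (r * Real.log r ^ 2)⁻¹) :=
        le_trans h2 (by rw [e1]; exact mul_le_mul_of_nonneg_right h3 hwnn)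
      calc |vθz r| ^ 2 * u r ^ 2 * r ≤ K₁ * (u r ^ 2 * (r * Real.log r ^ 2)⁻¹) := h4
        _ = K₁ * Set.indicator (Set.Ioc 0 δ) (fun r => g r ^ 2 * (r * Real.log r ^ 2)⁻¹) r := by
            rw [Set.indicator_of_mem hmem, hgur]
        _ ≤ W r := le_add_of_nonneg_right hterm2
    · push_neg at hrδ
      have hnot : r ∉ Set.Ioc (0:ℝ) δ := fun h => absurd h.2 (not_le.2 hrδ)
      have hmem2 : r ∈ Set.Ici δ := le_of_lt hrδ
      have hvb : |vθz r| ≤ M / r := by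
        have h0 := hbdd r hr
        rw [abs_mul, abs_of_pos hr] at h0
        rw [le_div_iff₀ hr]
        linarith [h0]
      have h2 : |vθz r| ^ 2 * u r ^ 2 * r ≤ (M / r) ^ 2 * u r ^ 2 * r :=
        mul_le_mul_of_nonneg_right
          (mul_le_mul_of_nonneg_right (pow_le_pow_left₀ (abs_nonneg _) hvb 2) (sq_nonneg _))
          (le_of_lt hr)
      have h5 : (0:ℝ) ≤ r ^ 2 - δ ^ 2 := by nlinarith
      have hrne : r ≠ 0 := ne_of_gt hr
      have hδne : δ ≠ 0 := ne_of_gt hδ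
      have e : M ^ 2 / δ ^ 2 * (u r ^ 2 * r) - (M / r) ^ 2 * u r ^ 2 * r
          = M ^ 2 * u r ^ 2 * (r ^ 2 - δ ^ 2) / (δ ^ 2 * r) := by
        field_simp
      have h6 : (0:ℝ) ≤ M ^ 2 * u r ^ 2 * (r ^ 2 - δ ^ 2) / (δ ^ 2 * r) :=
        div_nonneg (mul_nonneg (mul_nonneg (sq_nonneg _) (sq_nonneg _)) h5) (by positivity)
      calc |vθz r| ^ 2 * u r ^ 2 * r ≤ (M / r) ^ 2 * u r ^ 2 * r := h2
        _ ≤ M ^ 2 / δ ^ 2 * (u r ^ 2 * r) := by linarith [h6, e]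
        _ = W r := by
            rw [hWdef]
            simp only [Set.indicator_of_notMem hnot, Set.indicator_of_mem hmem2, mul_zero,
              zero_add]
    -- step A
  have hA : (∫ r in Set.Ioi (0:ℝ), |vθz r| ^ 2 * u r ^ 2 * r) ≤ ∫ r in Set.Ioi (0:ℝ), W r := by
    refine integral_mono_of_nonneg ?_ hWint ?_
    · refine (ae_restrict_iff' measurableSet_Ioi).2 (Filter.Eventually.of_forall fun r hr => ?_)
      exact mul_nonneg (mul_nonneg (sq_nonneg _) (sq_nonneg _)) (le_of_lt hr)
    · exact (ae_restrict_iff' measurableSet_Ioi).2 (Filter.Eventually.of_forall hAW)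
  have hWsplit : (∫ r in Set.Ioi (0:ℝ), W r)
      = K₁ * (∫ r in Set.Ioc (0:ℝ) δ, g r ^ 2 * (r * Real.log r ^ 2)⁻¹)
        + M ^ 2 / δ ^ 2 * ∫ r in Set.Ici δ, u r ^ 2 * r := by
    rw [hWdef]
    rw [integral_add ((hW1_int.const_mul K₁).integrableOn)
      ((hW2_int.const_mul (M ^ 2 / δ ^ 2)).integrableOn), integral_const_mul, integral_const_mul]
    congr 1
    · congr 1
      rw [integral_indicator measurableSet_Ioc, Measure.restrict_restrict measurableSet_Ioc,
        Set.inter_eq_self_of_subset_left Set.Ioc_subset_Ioi_self]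
    · congr 1
      have hsub : Set.Ici δ ⊆ Set.Ioi (0:ℝ) := fun x hx => lt_of_lt_of_le hδ hx
      rw [integral_indicator measurableSet_Ici, Measure.restrict_restrict measurableSet_Ici,
        Set.inter_eq_self_of_subset_left hsub]
  -- step B : enlarge domain
  have hB1 : (∫ r in Set.Ioc (0:ℝ) δ, g r ^ 2 * (r * Real.log r ^ 2)⁻¹)
      ≤ ∫ r in Set.Ioc (0:ℝ) (2 * δ), g r ^ 2 * (r * Real.log r ^ 2)⁻¹ := by
    refine setIntegral_mono_set hgw_int ?_
      ((Set.Ioc_subset_Ioc_right (by linarith)).eventuallyLE)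
    exact (ae_restrict_iff' measurableSet_Ioc).2 (Filter.Eventually.of_forall hgw_nonneg)
  -- step C : Hardy
  have hC := aux_hardy hb0 hδ1 g g' hg hgc hg'c hgb S (B * S + Sd) hgS hg'G
  -- step D : derivative of cutoff product
  have hind_int : IntegrableOn
      (fun r => Set.indicator (Set.Icc δ (2 * δ)) (fun r => u r ^ 2 * r) r)
      (Set.Ioc 0 (2 * δ)) :=
    ((h_u2r_int.integrableOn.integrable_indicator measurableSet_Icc).integrableOn)
  have hD1 : (∫ r in Set.Ioc (0:ℝ) (2 * δ), g' r ^ 2 * r)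
      ≤ ∫ r in Set.Ioc (0:ℝ) (2 * δ),
          (2 * B ^ 2 * Set.indicator (Set.Icc δ (2 * δ)) (fun r => u r ^ 2 * r) r
            + 2 * (d r ^ 2 * r)) := by
    refine setIntegral_mono_on h_g'2r_int.integrableOn
      ((hind_int.const_mul (2 * B ^ 2)).add ((h_d2r_int.integrableOn).const_mul 2))
      measurableSet_Ioc ?_
    intro r hr
    by_cases hmem : r ∈ Set.Icc δ (2 * δ)
    · rw [Set.indicator_of_mem hmem]
      show (deriv φ r * u r + φ r * d r) ^ 2 * r ≤ 2 * B ^ 2 * (u r ^ 2 * r) + 2 * (d r ^ 2 * r)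
      have ha : (deriv φ r) ^ 2 ≤ B ^ 2 := by
        rw [← sq_abs]; exact pow_le_pow_left₀ (abs_nonneg _) (hB r) 2
      have hb' : (φ r) ^ 2 ≤ 1 := by nlinarith [(hφ01 r).1, (hφ01 r).2]
      have hx : (deriv φ r * u r) ^ 2 ≤ B ^ 2 * u r ^ 2 := by
        rw [mul_pow]; exact mul_le_mul_of_nonneg_right ha (sq_nonneg _)
      have hy : (φ r * d r) ^ 2 ≤ d r ^ 2 := by
        rw [mul_pow]
        calc (φ r) ^ 2 * d r ^ 2 ≤ 1 * d r ^ 2 := mul_le_mul_of_nonneg_right hb' (sq_nonneg _)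
          _ = d r ^ 2 := one_mul _
      have h1 : (deriv φ r * u r + φ r * d r) ^ 2 ≤ 2 * B ^ 2 * u r ^ 2 + 2 * d r ^ 2 := by
        nlinarith [sq_nonneg (deriv φ r * u r - φ r * d r)]
      calc (deriv φ r * u r + φ r * d r) ^ 2 * r ≤ (2 * B ^ 2 * u r ^ 2 + 2 * d r ^ 2) * r :=
            mul_le_mul_of_nonneg_right h1 (le_of_lt hr.1)
        _ = 2 * B ^ 2 * (u r ^ 2 * r) + 2 * (d r ^ 2 * r) := by ring
    · rw [Set.indicator_of_notMem hmem, mul_zero, zero_add]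
      have hd0 : deriv φ r = 0 := hφ'0 r hmem
      show (deriv φ r * u r + φ r * d r) ^ 2 * r ≤ 2 * (d r ^ 2 * r)
      rw [hd0]
      have hb' : (φ r) ^ 2 ≤ 1 := by nlinarith [(hφ01 r).1, (hφ01 r).2]
      have hd2r : 0 ≤ d r ^ 2 * r := mul_nonneg (sq_nonneg _) (le_of_lt hr.1)
      calc (0 * u r + φ r * d r) ^ 2 * r = (φ r) ^ 2 * d r ^ 2 * r := by ring
        _ ≤ 1 * d r ^ 2 * r :=
            mul_le_mul_of_nonneg_right (mul_le_mul_of_nonneg_right hb' (sq_nonneg _))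
              (le_of_lt hr.1)
        _ ≤ 2 * (d r ^ 2 * r) := by nlinarith [hd2r]
  rw [integral_add (hind_int.const_mul (2 * B ^ 2)) ((h_d2r_int.integrableOn).const_mul 2),
    integral_const_mul, integral_const_mul] at hD1
  have hD3 : (∫ r in Set.Ioc (0:ℝ) (2 * δ),
        Set.indicator (Set.Icc δ (2 * δ)) (fun r => u r ^ 2 * r) r)
      ≤ ∫ r in Set.Ici δ, u r ^ 2 * r := by
    rw [integral_indicator measurableSet_Icc, Measure.restrict_restrict measurableSet_Icc]
    refine setIntegral_mono_set h_u2r_int.integrableOn ?_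
      (((Set.inter_subset_left).trans Set.Icc_subset_Ici_self).eventuallyLE)
    refine (ae_restrict_iff' measurableSet_Ici).2 (Filter.Eventually.of_forall fun x hx => ?_)
    exact mul_nonneg (sq_nonneg _) (le_trans (le_of_lt hδ) hx)
  have hD4 : (∫ r in Set.Ioc (0:ℝ) (2 * δ), d r ^ 2 * r)
      ≤ ∫ r in Set.Ioi (0:ℝ), d r ^ 2 * r := by
    refine setIntegral_mono_set h_d2r_int.integrableOn ?_
      ((Set.Ioc_subset_Ioi_self).eventuallyLE)
    refine (ae_restrict_iff' measurableSet_Ioi).2 (Filter.Eventually.of_forall fun x hx => ?_)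
    exact mul_nonneg (sq_nonneg _) (le_of_lt hx)
  -- assemble
  have hchain : (∫ r in Set.Ioc (0:ℝ) δ, g r ^ 2 * (r * Real.log r ^ 2)⁻¹)
      ≤ 8 * B ^ 2 * (∫ r in Set.Ici δ, u r ^ 2 * r) + 8 * ∫ r in Set.Ioi (0:ℝ), d r ^ 2 * r := by
    have e1 : 2 * B ^ 2 * (∫ r in Set.Ioc (0:ℝ) (2 * δ),
          Set.indicator (Set.Icc δ (2 * δ)) (fun r => u r ^ 2 * r) r)
        ≤ 2 * B ^ 2 * ∫ r in Set.Ici δ, u r ^ 2 * r :=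
      mul_le_mul_of_nonneg_left hD3 (by positivity)
    linarith
  have hKP : K₁ * (∫ r in Set.Ioc (0:ℝ) δ, g r ^ 2 * (r * Real.log r ^ 2)⁻¹)
      ≤ K₁ * (8 * B ^ 2 * (∫ r in Set.Ici δ, u r ^ 2 * r)
          + 8 * ∫ r in Set.Ioi (0:ℝ), d r ^ 2 * r) :=
    mul_le_mul_of_nonneg_left hchain hK₁nn
  rw [hWsplit] at hA
  nlinarith [hA, hKP]

lemma aux_prod_int (F : ℝ × ℝ → ℝ) (hFc : Continuous F) (hFcs : HasCompactSupport F)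
    (s : Set ℝ) (hs : MeasurableSet s) :
    Integrable (fun z => ∫ r in s, F (r, z)) := by
  have hG : Continuous (fun q : ℝ × ℝ => F (q.2, q.1)) := hFc.comp continuous_swap
  have hGcs : HasCompactSupport (fun q : ℝ × ℝ => F (q.2, q.1)) :=
    hFcs.comp_homeomorph (Homeomorph.prodComm ℝ ℝ)
  have hGint : Integrable (fun q : ℝ × ℝ => F (q.2, q.1)) :=
    hG.integrable_of_hasCompactSupport hGcs
  have e : ((volume : Measure ℝ).restrict Set.univ).prod ((volume : Measure ℝ).restrict s)
      = ((volume : Measure ℝ).prod volume).restrict (Set.univ ×ˢ s) :=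
    Measure.prod_restrict _ _
  rw [Measure.restrict_univ] at e
  have h1 : Integrable (fun q : ℝ × ℝ => F (q.2, q.1))
      ((volume : Measure ℝ).prod ((volume : Measure ℝ).restrict s)) := by
    rw [e, ← MeasureTheory.Measure.volume_eq_prod]
    exact hGint.restrict
  exact h1.integral_prod_left

/-- Quadratic form boundedness for `|v^θ|²` deduced from the linear-in-weight
FBC for `|v^θ|/r`, the logarithmic smallness of `rv^θ` near the axis, and the
global bound `|rv^θ| ≤ M`. -/
theorem stmt18 (vθ : ℝ → ℝ → ℝ) (C₁ M δ : ℝ) (hC₁ : 1 < C₁) (hM : 0 ≤ M)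
    (hδ : 0 < δ) (hδ1 : 2 * δ < 1)
    (hFB : ∀ g : ℝ × ℝ → ℝ, ContDiff ℝ (⊤ : ℕ∞) g → HasCompactSupport g →
      Function.support g ⊆ {p : ℝ × ℝ | p.1 ≤ 2 * δ} →
      ∫ z : ℝ, ∫ r in Set.Ioi (0:ℝ), (|vθ r z| / r) * (g (r, z)) ^ 2 * r
        ≤ C₁ * ∫ z : ℝ, ∫ r in Set.Ioi (0:ℝ), (fderiv ℝ g (r, z) (1, 0)) ^ 2 * r)
    (hlog : ∀ r ∈ Set.Ioc (0:ℝ) (2 * δ), ∀ z : ℝ,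
      |r * vθ r z| ≤ C₁ / |Real.log r| ^ 2)
    (hbdd : ∀ r > (0:ℝ), ∀ z : ℝ, |r * vθ r z| ≤ M) :
    ∃ C : ℝ, 0 ≤ C ∧ ∀ f : ℝ × ℝ → ℝ, ContDiff ℝ (⊤ : ℕ∞) f → HasCompactSupport f →
      ∫ z : ℝ, ∫ r in Set.Ioi (0:ℝ), |vθ r z| ^ 2 * (f (r, z)) ^ 2 * r
        ≤ 8 * C₁ ^ 2 * |Real.log δ|⁻¹ ^ 2
            * (∫ z : ℝ, ∫ r in Set.Ioi (0:ℝ), (fderiv ℝ f (r, z) (1, 0)) ^ 2 * r)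
          + C * ∫ z : ℝ, ∫ r in Set.Ici δ, (f (r, z)) ^ 2 * r := by
  classical
  -- the cutoff function
  set φ : ℝ → ℝ := fun x => Real.smoothTransition ((2 * δ - x) / δ) with hφdef
  have h0 : ContDiff ℝ ((⊤ : ℕ∞) : WithTop ℕ∞) (fun x : ℝ => (2 * δ - x) / δ) :=
    (contDiff_const.sub contDiff_id).div_const δ
  have hφcd : ContDiff ℝ ((⊤ : ℕ∞) : WithTop ℕ∞) φ :=
    Real.smoothTransition.contDiff.comp h0
  have hφc : Continuous φ := hφcd.continuous
  have hφ1 : ∀ x ≤ δ, φ x = 1 := by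
    intro x hx
    exact Real.smoothTransition.one_of_one_le (by rw [le_div_iff₀ hδ]; linarith)
  have hφz : ∀ x, 2 * δ ≤ x → φ x = 0 := by
    intro x hx
    exact Real.smoothTransition.zero_of_nonpos
      (div_nonpos_of_nonpos_of_nonneg (by linarith) (le_of_lt hδ))
  have hφ01 : ∀ x, 0 ≤ φ x ∧ φ x ≤ 1 := fun x =>
    ⟨Real.smoothTransition.nonneg _, Real.smoothTransition.le_one _⟩
  have hφd : ∀ x, HasDerivAt φ (deriv φ x) x := fun x =>
    (hφcd.differentiable (by simp) x).hasDerivAt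
  have hφ'0 : ∀ x, x ∉ Set.Icc δ (2 * δ) → deriv φ x = 0 := by
    intro x hx
    rcases not_and_or.1 hx with h | h
    · push_neg at h
      have he : φ =ᶠ[nhds x] fun _ => 1 := by
        filter_upwards [Iio_mem_nhds h] with y hy using hφ1 y (le_of_lt hy)
      rw [he.deriv_eq]; exact deriv_const x 1
    · push_neg at h
      have he : φ =ᶠ[nhds x] fun _ => 0 := by
        filter_upwards [Ioi_mem_nhds h] with y hy using hφz y (le_of_lt hy)
      rw [he.deriv_eq]; exact deriv_const x 0
  have hφ'c : Continuous (deriv φ) := hφcd.continuous_deriv (by exact_mod_cast le_top)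
  have hφ'cs : HasCompactSupport (deriv φ) :=
    HasCompactSupport.intro (isCompact_Icc (a := δ) (b := 2 * δ)) hφ'0
  obtain ⟨B, hBmem⟩ : BddAbove (Set.range fun x => ‖deriv φ x‖) :=
    hφ'c.norm.bddAbove_range_of_hasCompactSupport hφ'cs.norm
  have hB : ∀ x, |deriv φ x| ≤ B := fun x => by
    simpa using hBmem (Set.mem_range_self x)
  refine ⟨8 * (C₁ ^ 2 * |Real.log δ|⁻¹ ^ 2) * B ^ 2 + M ^ 2 / δ ^ 2, ?_, ?_⟩
  · have hBnn : 0 ≤ B := le_trans (abs_nonneg _) (hB 0)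
    positivity
  intro f hf hfc
  have hfcont : Continuous f := hf.continuous
  obtain ⟨S, hSmem⟩ : BddAbove (Set.range fun p => ‖f p‖) :=
    hfcont.norm.bddAbove_range_of_hasCompactSupport hfc.norm
  have hS : ∀ p, |f p| ≤ S := fun p => by simpa using hSmem (Set.mem_range_self p)
  set df : ℝ × ℝ → ℝ := fun p => fderiv ℝ f p (1, 0) with hdfdef
  have hdfc : Continuous df := (hf.continuous_fderiv (by simp)).clm_apply continuous_const
  have hdfcs : HasCompactSupport df :=
    (hfc.fderiv ℝ).comp_left (g := fun L : ℝ × ℝ →L[ℝ] ℝ => L (1, 0)) rfl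
  obtain ⟨Sd, hSdmem⟩ : BddAbove (Set.range fun p => ‖df p‖) :=
    hdfc.norm.bddAbove_range_of_hasCompactSupport hdfcs.norm
  have hSd : ∀ p, |df p| ≤ Sd := fun p => by simpa using hSdmem (Set.mem_range_self p)
  obtain ⟨R, hR⟩ :=
    ((hfc.isBounded.union hdfcs.isBounded)).subset_closedBall 0
  have hfR : ∀ z r, R < |r| → f (r, z) = 0 := by
    intro z r h
    by_contra hne
    have h1 : (r, z) ∈ tsupport f := subset_closure (Function.mem_support.2 hne)
    have h2 : (r, z) ∈ Metric.closedBall (0 : ℝ × ℝ) R := hR (Or.inl h1)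
    rw [Metric.mem_closedBall, dist_zero_right] at h2
    have h3 : |r| ≤ ‖((r, z) : ℝ × ℝ)‖ := by simpa using norm_fst_le ((r, z) : ℝ × ℝ)
    linarith
  have hdfR : ∀ z r, R < |r| → df (r, z) = 0 := by
    intro z r h
    by_contra hne
    have h1 : (r, z) ∈ tsupport df := subset_closure (Function.mem_support.2 hne)
    have h2 : (r, z) ∈ Metric.closedBall (0 : ℝ × ℝ) R := hR (Or.inr h1)
    rw [Metric.mem_closedBall, dist_zero_right] at h2
    have h3 : |r| ≤ ‖((r, z) : ℝ × ℝ)‖ := by simpa using norm_fst_le ((r, z) : ℝ × ℝ)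
    linarith
  -- the per-z estimate
  have key : ∀ z : ℝ,
      (∫ r in Set.Ioi (0:ℝ), |vθ r z| ^ 2 * (f (r, z)) ^ 2 * r)
        ≤ 8 * (C₁ ^ 2 * |Real.log δ|⁻¹ ^ 2)
              * (∫ r in Set.Ioi (0:ℝ), (fderiv ℝ f (r, z) (1, 0)) ^ 2 * r)
            + (8 * (C₁ ^ 2 * |Real.log δ|⁻¹ ^ 2) * B ^ 2 + M ^ 2 / δ ^ 2)
              * ∫ r in Set.Ici δ, (f (r, z)) ^ 2 * r := by
    intro z
    have hud : ∀ r : ℝ, HasDerivAt (fun r => f (r, z)) (fderiv ℝ f (r, z) (1, 0)) r := by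
      intro r
      have hc : HasDerivAt (fun r : ℝ => ((r, z) : ℝ × ℝ)) (1, 0) r :=
        (hasDerivAt_id r).prodMk (hasDerivAt_const r z)
      exact ((hf.differentiable (by simp) (r, z)).hasFDerivAt).comp_hasDerivAt r hc
    exact aux_key (fun r => vθ r z) C₁ M δ (by linarith) hM hδ hδ1
      (fun r hr => hlog r hr z) (fun r hr => hbdd r hr z)
      (fun r => f (r, z)) (fun r => fderiv ℝ f (r, z) (1, 0)) hud
      (hfcont.comp (continuous_id.prodMk continuous_const))
      (hdfc.comp (continuous_id.prodMk continuous_const))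
      S (fun r => hS (r, z)) Sd (fun r => hSd (r, z)) R
      (fun r h => hfR z r h) (fun r h => hdfR z r h)
      φ hφd hφc hφ'c hφ1 hφz hφ01 hφ'0 B hB
  -- outer integrability
  have hDint : Integrable (fun z => ∫ r in Set.Ioi (0:ℝ), (fderiv ℝ f (r, z) (1, 0)) ^ 2 * r) := by
    have hFc : Continuous (fun p : ℝ × ℝ => df p ^ 2 * p.1) :=
      (hdfc.pow 2).mul continuous_fst
    have hFcs : HasCompactSupport (fun p : ℝ × ℝ => df p ^ 2 * p.1) := by
      refine HasCompactSupport.intro hdfcs (fun x hx => ?_)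
      rw [image_eq_zero_of_notMem_tsupport hx]; ring
    exact aux_prod_int _ hFc hFcs (Set.Ioi 0) measurableSet_Ioi
  have hQint : Integrable (fun z => ∫ r in Set.Ici δ, (f (r, z)) ^ 2 * r) := by
    have hFc : Continuous (fun p : ℝ × ℝ => (f p) ^ 2 * p.1) :=
      (hfcont.pow 2).mul continuous_fst
    have hFcs : HasCompactSupport (fun p : ℝ × ℝ => (f p) ^ 2 * p.1) := by
      refine HasCompactSupport.intro hfc (fun x hx => ?_)
      rw [image_eq_zero_of_notMem_tsupport hx]; ring
    exact aux_prod_int _ hFc hFcs (Set.Ici δ) measurableSet_Ici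
  have h1 : (∫ z : ℝ, ∫ r in Set.Ioi (0:ℝ), |vθ r z| ^ 2 * (f (r, z)) ^ 2 * r)
      ≤ ∫ z : ℝ,
          (8 * (C₁ ^ 2 * |Real.log δ|⁻¹ ^ 2)
              * (∫ r in Set.Ioi (0:ℝ), (fderiv ℝ f (r, z) (1, 0)) ^ 2 * r)
            + (8 * (C₁ ^ 2 * |Real.log δ|⁻¹ ^ 2) * B ^ 2 + M ^ 2 / δ ^ 2)
              * ∫ r in Set.Ici δ, (f (r, z)) ^ 2 * r) := by
    refine integral_mono_of_nonneg (Filter.Eventually.of_forall fun z => ?_)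
      ((hDint.const_mul _).add (hQint.const_mul _)) (Filter.Eventually.of_forall key)
    exact setIntegral_nonneg measurableSet_Ioi fun r hr =>
      mul_nonneg (mul_nonneg (sq_nonneg _) (sq_nonneg _)) (le_of_lt hr)
  rw [integral_add (hDint.const_mul _) (hQint.const_mul _), integral_const_mul,
    integral_const_mul] at h1
  calc (∫ z : ℝ, ∫ r in Set.Ioi (0:ℝ), |vθ r z| ^ 2 * (f (r, z)) ^ 2 * r) ≤ _ := h1
    _ = 8 * C₁ ^ 2 * |Real.log δ|⁻¹ ^ 2
          * (∫ z : ℝ, ∫ r in Set.Ioi (0:ℝ), (fderiv ℝ f (r, z) (1, 0)) ^ 2 * r)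
        + (8 * (C₁ ^ 2 * |Real.log δ|⁻¹ ^ 2) * B ^ 2 + M ^ 2 / δ ^ 2)
          * ∫ z : ℝ, ∫ r in Set.Ici δ, (f (r, z)) ^ 2 * r := by ring
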